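/- Quantile coverage lemma for exchangeable scores (i.i.d. version): let S₁, …, S_{n+1} be i.i.d. real-valued random variables, α ∈ (0,1), and let λ̂ be the ⌈(n+1)(1−α)⌉-th smallest value among S₁, …, Sₙ (assuming ⌈(n+1)(1−α)⌉ ≤ n). Then P(S_{n+1} ≤ λ̂) ≥ 1 − α. -/

import Mathlib

open MeasureTheory ProbabilityTheory Finset
open scoped ENNReal

lemma sorted_getD_iff (s : List ℝ) (hs : s.Pairwise (· ≤ ·)) (x : ℝ) (k : ℕ)
    (hk1 : 1 ≤ k) (hkl : k ≤ s.length) :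
    x ≤ s.getD (k-1) 0 ↔ s.countP (fun a => decide (a < x)) < k := by
  have hlt : k - 1 < s.length := by omega
  rw [List.getD_eq_getElem s 0 hlt]
  constructor
  · intro hx
    have hsplit : s.countP (fun a => decide (a < x)) =
        (List.take (k-1) s).countP (fun a => decide (a < x)) +
        (List.drop (k-1) s).countP (fun a => decide (a < x)) := by
      conv_lhs => rw [← List.take_append_drop (k-1) s]
      rw [List.countP_append]
    have hdrop : (List.drop (k-1) s).countP (fun a => decide (a < x)) = 0 := by
      rw [List.countP_eq_zero]
      intro a ha
      obtain ⟨j, hj, rfl⟩ := List.mem_iff_getElem.mp ha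
      rw [List.getElem_drop]
      simp only [decide_eq_true_eq, not_lt]
      refine hx.trans ?_
      have := hs.rel_get_of_le (a := ⟨k-1, hlt⟩)
        (b := ⟨k-1+j, by have := hj; simp [List.length_drop] at this; omega⟩) (by simp)
      simpa [List.get_eq_getElem] using this
    have := List.countP_le_length (l := List.take (k-1) s) (p := fun a => decide (a < x))
    rw [hsplit, hdrop]
    simp only [List.length_take] at this
    omega
  · intro hc
    by_contra hx
    push_neg at hx
    have htake : (List.take k s).countP (fun a => decide (a < x)) = k := by
      have hall : ∀ a ∈ List.take k s, (fun a => decide (a < x)) a = true := by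
        intro a ha
        obtain ⟨j, hj, rfl⟩ := List.mem_iff_getElem.mp ha
        rw [List.getElem_take]
        simp only [decide_eq_true_eq]
        refine lt_of_le_of_lt ?_ hx
        have hj' : j < s.length := by
          have := hj; simp [List.length_take] at this; omega
        have := hs.rel_get_of_le (a := ⟨j, hj'⟩) (b := ⟨k-1, hlt⟩)
          (by simp [Fin.le_def]; have := hj; simp [List.length_take] at this; omega)
        simpa [List.get_eq_getElem] using this
      rw [List.countP_eq_length.mpr hall, List.length_take]
      omega
    have := (List.take_sublist k s).countP_le (p := fun a => decide (a < x))
    omega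

lemma countP_ofFn' {n : ℕ} (f : Fin n → ℝ) (q : ℝ → Prop) [DecidablePred q] :
    (List.ofFn f).countP (fun a => decide (q a)) =
      (univ.filter fun i => q (f i)).card := by
  rw [List.ofFn_eq_map, List.countP_map, List.countP_eq_length_filter]
  have : (univ.filter fun i => q (f i)) =
      ((List.finRange n).filter fun i => decide (q (f i))).toFinset := by
    ext i
    simp [List.mem_filter]
  rw [this, List.toFinset_card_of_nodup]
  · rfl
  · exact (List.nodup_finRange n).filter _

lemma count_lt_lemma {m : ℕ} (v : Fin m → ℝ) (k : ℕ) (hkm : k ≤ m) :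
    k ≤ (univ.filter fun j : Fin m =>
      (univ.filter fun i => v i < v j).card < k).card := by
  classical
  set σ := Tuple.sort v with hσ
  have hmono : Monotone (v ∘ σ) := Tuple.monotone_sort v
  have hinj : Function.Injective (fun t : Fin k => σ (Fin.castLE hkm t)) := by
    intro a b hab
    exact Fin.castLE_injective hkm (σ.injective hab)
  have hsub : ∀ t : Fin k, σ (Fin.castLE hkm t) ∈
      univ.filter fun j : Fin m => (univ.filter fun i => v i < v j).card < k := by
    intro t
    simp only [mem_filter, mem_univ, true_and]
    set j := σ (Fin.castLE hkm t) with hj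
    have hcard : (univ.filter fun i' => v (σ i') < v j).card
        = (univ.filter fun i => v i < v j).card := by
      refine Finset.card_bij' (fun i' _ => σ i') (fun i _ => σ.symm i) ?_ ?_ ?_ ?_
      · intro a ha
        simp only [mem_filter, mem_univ, true_and] at ha ⊢
        exact ha
      · intro a ha
        simp only [mem_filter, mem_univ, true_and] at ha ⊢
        simpa using ha
      · intro a _
        simp
      · intro a _
        simp
    rw [← hcard]
    have hsubset : (univ.filter fun i' => v (σ i') < v j) ⊆
        univ.filter fun i' : Fin m => i' < Fin.castLE hkm t := by
      intro i' hi'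
      simp only [mem_filter, mem_univ, true_and] at hi' ⊢
      by_contra h
      push_neg at h
      exact absurd (hmono h) (not_le.mpr hi')
    calc (univ.filter fun i' => v (σ i') < v j).card
        ≤ (univ.filter fun i' : Fin m => i' < Fin.castLE hkm t).card :=
          Finset.card_le_card hsubset
      _ = (Fin.castLE hkm t : ℕ) := by
          have : (univ.filter fun i' : Fin m => i' < Fin.castLE hkm t)
              = Finset.Iio (Fin.castLE hkm t) := by ext i; simp
          rw [this, Fin.card_Iio]
      _ < k := t.isLt
  calc k = Fintype.card (Fin k) := (Fintype.card_fin k).symm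
    _ = (univ : Finset (Fin k)).card := rfl
    _ ≤ _ := Finset.card_le_card_of_injOn _ (fun t _ => hsub t) (hinj.injOn)

lemma joint_eq_pi' {Ω : Type*} [MeasurableSpace Ω]
    (μ : Measure Ω) [IsProbabilityMeasure μ]
    (n : ℕ) (S : Fin (n + 1) → Ω → ℝ)
    (hmeas : ∀ i, Measurable (S i))
    (hindep : iIndepFun S μ)
    (hident : ∀ i j, μ.map (S i) = μ.map (S j)) :
    μ.map (fun ω i => S i ω) =
      Measure.pi (fun _ : Fin (n+1) => μ.map (S (Fin.last n))) := by
  have hJmeas : Measurable (fun ω (i : Fin (n+1)) => S i ω) :=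
    measurable_pi_lambda _ hmeas
  have hprob : ∀ i : Fin (n+1), IsProbabilityMeasure (μ.map (S i)) :=
    fun i => Measure.isProbabilityMeasure_map (hmeas i).aemeasurable
  haveI : IsProbabilityMeasure (μ.map (S (Fin.last n))) := hprob _
  refine (Measure.pi_eq (μ := fun _ : Fin (n+1) => μ.map (S (Fin.last n)))
    fun s hs => ?_).symm
  rw [Measure.map_apply hJmeas (MeasurableSet.univ_pi hs)]
  have hpre : (fun ω (i : Fin (n+1)) => S i ω) ⁻¹' Set.pi Set.univ s
      = ⋂ i ∈ (univ : Finset (Fin (n+1))), S i ⁻¹' s i := by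
    ext ω; simp [Set.mem_pi]
  rw [hpre, hindep.measure_inter_preimage_eq_mul univ (fun i _ => hs i)]
  refine Finset.prod_congr rfl fun i _ => ?_
  rw [← hident i (Fin.last n), Measure.map_apply (hmeas i) (hs i)]

/-- The k-th smallest value (1-indexed) among the first `n` variables, evaluated at `ω`. -/
noncomputable def kthSmallest {Ω : Type*} (n : ℕ) (S : Fin (n + 1) → Ω → ℝ)
    (k : ℕ) (ω : Ω) : ℝ :=
  ((List.ofFn fun i : Fin n => S i.castSucc ω).insertionSort (· ≤ ·)).getD (k - 1) 0

theorem conformal_quantile_coverage {Ω : Type*} [MeasurableSpace Ω]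
    (μ : Measure Ω) [IsProbabilityMeasure μ]
    (n : ℕ) (S : Fin (n + 1) → Ω → ℝ)
    (hmeas : ∀ i, Measurable (S i))
    (hindep : iIndepFun S μ)
    (hident : ∀ i j, μ.map (S i) = μ.map (S j))
    (α : ℝ) (hα0 : 0 < α) (hα1 : α < 1)
    (k : ℕ) (hk : (k : ℝ) = ⌈((n : ℝ) + 1) * (1 - α)⌉)
    (hkn : k ≤ n) :
    ENNReal.ofReal (1 - α) ≤
      μ {ω | S (Fin.last n) ω ≤ kthSmallest n S k ω} := by
  classical
  have hα1' : (0:ℝ) < 1 - α := by linarith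
  have hk1 : 1 ≤ k := by
    have hpos : (0:ℝ) < ((n:ℝ)+1) * (1-α) := by positivity
    have h1 : (1:ℝ) ≤ (k:ℝ) := by
      rw [hk]
      exact_mod_cast Int.ceil_pos.mpr hpos
    exact_mod_cast h1
  set m := μ.map (S (Fin.last n)) with hm
  set J : Ω → (Fin (n+1) → ℝ) := fun ω i => S i ω with hJdef
  have hJmeas : Measurable J := measurable_pi_lambda _ hmeas
  set ν := Measure.pi (fun _ : Fin (n+1) => m) with hν
  have hJ : μ.map J = ν := joint_eq_pi' μ n S hmeas hindep hident
  set B : Fin (n+1) → Set (Fin (n+1) → ℝ) :=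
    fun j => {x | (univ.filter fun i => x i < x j).card < k} with hB
  have hBmeas : ∀ j, MeasurableSet (B j) := by
    intro j
    have hcm : Measurable fun x : Fin (n+1) → ℝ =>
        (univ.filter fun i => x i < x j).card := by
      simp_rw [Finset.card_filter]
      refine Finset.measurable_sum _ fun i _ => ?_
      exact Measurable.ite
        (measurableSet_lt (measurable_pi_apply i) (measurable_pi_apply j))
        measurable_const measurable_const
    have : B j = (fun x : Fin (n+1) → ℝ =>
        (univ.filter fun i => x i < x j).card) ⁻¹' (Set.Iio k) := rfl
    rw [this]
    exact hcm measurableSet_Iio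
  have hAmeas : ∀ j, MeasurableSet (J ⁻¹' B j) := fun j => hJmeas (hBmeas j)
  -- permutation invariance
  have hperm : ∀ j, ν (B j) = ν (B (Fin.last n)) := by
    intro j
    set σ := Equiv.swap j (Fin.last n) with hσdef
    set e := MeasurableEquiv.piCongrLeft (fun _ : Fin (n+1) => ℝ) σ.symm with hedef
    have hmp : MeasurePreserving e ν ν :=
      measurePreserving_piCongrLeft (fun _ : Fin (n+1) => m) σ.symm
    have happ : ∀ (x : Fin (n+1) → ℝ) i, e x i = x (σ i) := by
      intro x i
      have := Equiv.piCongrLeft_apply_apply (P := fun _ : Fin (n+1) => ℝ)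
        (e := σ.symm) x (σ i)
      simp only [Equiv.symm_apply_apply] at this
      rw [hedef, MeasurableEquiv.coe_piCongrLeft]
      exact this
    have hpre : e ⁻¹' (B j) = B (Fin.last n) := by
      ext x
      simp only [Set.mem_preimage, hB, Set.mem_setOf_eq, happ]
      have hσj : σ j = Fin.last n := Equiv.swap_apply_left _ _
      rw [hσj]
      have hcard : (univ.filter fun i => x (σ i) < x (Fin.last n)).card
          = (univ.filter fun i => x i < x (Fin.last n)).card := by
        refine Finset.card_bij' (fun i _ => σ i) (fun i _ => σ.symm i) ?_ ?_ ?_ ?_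
        · intro a ha
          simp only [mem_filter, mem_univ, true_and] at ha ⊢
          exact ha
        · intro a ha
          simp only [mem_filter, mem_univ, true_and] at ha ⊢
          simpa using ha
        · intro a _
          simp
        · intro a _
          simp
      rw [hcard]
    calc ν (B j) = ν (e ⁻¹' (B j)) := (hmp.measure_preimage_equiv _).symm
      _ = ν (B (Fin.last n)) := by rw [hpre]
  -- pointwise counting bound
  have hpoint : ∀ ω, (k:ℝ≥0∞) ≤
      ∑ j, (J ⁻¹' B j).indicator (fun _ => (1:ℝ≥0∞)) ω := by
    intro ω
    have hdet := count_lt_lemma (fun i : Fin (n+1) => S i ω) k (by omega)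
    calc (k:ℝ≥0∞) ≤ ((univ.filter fun j : Fin (n+1) =>
        (univ.filter fun i => S i ω < S j ω).card < k).card : ℝ≥0∞) := by
          exact_mod_cast hdet
      _ = ∑ j, (J ⁻¹' B j).indicator (fun _ => (1:ℝ≥0∞)) ω := by
          rw [Finset.card_filter]
          push_cast
          refine Finset.sum_congr rfl fun j _ => ?_
          by_cases h : (univ.filter fun i => S i ω < S j ω).card < k <;>
            simp [Set.indicator_apply, h, hB, hJdef]
  have hsum : (k:ℝ≥0∞) ≤ ∑ j, μ (J ⁻¹' B j) := by
    have heq : ∫⁻ ω, ∑ j, (J ⁻¹' B j).indicator (fun _ => (1:ℝ≥0∞)) ω ∂μ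
        = ∑ j, μ (J ⁻¹' B j) := by
      rw [lintegral_finset_sum]
      · refine (Finset.sum_congr rfl fun j _ => ?_)
        rw [show ((J ⁻¹' B j).indicator fun _ => (1:ℝ≥0∞)) = (J ⁻¹' B j).indicator 1 from rfl,
          lintegral_indicator (hAmeas j)]
        simp
      · exact fun j _ => measurable_one.indicator (hAmeas j)
    calc (k:ℝ≥0∞) = ∫⁻ _, (k:ℝ≥0∞) ∂μ := by simp
      _ ≤ ∫⁻ ω, ∑ j, (J ⁻¹' B j).indicator (fun _ => (1:ℝ≥0∞)) ω ∂μ :=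
          lintegral_mono hpoint
      _ = _ := heq
  have hμA : ∀ j, μ (J ⁻¹' B j) = ν (B j) := fun j => by
    rw [← hJ, Measure.map_apply hJmeas (hBmeas j)]
  have hconst : ∑ j : Fin (n+1), μ (J ⁻¹' B j)
      = ((n:ℝ≥0∞)+1) * μ (J ⁻¹' B (Fin.last n)) := by
    have hall : ∀ j, μ (J ⁻¹' B j) = μ (J ⁻¹' B (Fin.last n)) := fun j => by
      rw [hμA, hperm, ← hμA]
    rw [Finset.sum_congr rfl fun j _ => hall j, Finset.sum_const,
      Finset.card_univ, Fintype.card_fin, nsmul_eq_mul]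
    push_cast
    ring
  -- event equality
  have hevent : {ω | S (Fin.last n) ω ≤ kthSmallest n S k ω} = J ⁻¹' B (Fin.last n) := by
    ext ω
    simp only [Set.mem_setOf_eq, Set.mem_preimage, hB, hJdef]
    set l := List.ofFn fun i : Fin n => S i.castSucc ω with hl
    have hsrt : (l.insertionSort (· ≤ ·)).Pairwise (· ≤ ·) :=
      List.pairwise_insertionSort _ _
    have hlen : (l.insertionSort (· ≤ ·)).length = n := by
      rw [List.length_insertionSort, hl, List.length_ofFn]
    have hiff := sorted_getD_iff (l.insertionSort (· ≤ ·)) hsrt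
      (S (Fin.last n) ω) k hk1 (by rw [hlen]; exact hkn)
    show S (Fin.last n) ω ≤ kthSmallest n S k ω ↔ _
    unfold kthSmallest
    rw [← hl, hiff, (List.perm_insertionSort (· ≤ ·) l).countP_eq, hl,
      countP_ofFn' (fun i : Fin n => S i.castSucc ω) (fun a => a < S (Fin.last n) ω)]
    have hcast : (univ.filter fun i : Fin (n+1) => S i ω < S (Fin.last n) ω).card
        = (univ.filter fun i : Fin n => S i.castSucc ω < S (Fin.last n) ω).card := by
      rw [Finset.card_filter, Finset.card_filter, Fin.sum_univ_castSucc]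
      simp
    rw [hcast]
  rw [hevent]
  -- final arithmetic
  have hfin : (k:ℝ≥0∞) ≤ ((n:ℝ≥0∞)+1) * μ (J ⁻¹' B (Fin.last n)) := by
    rw [← hconst]; exact hsum
  have hne : ((n:ℝ≥0∞)+1) ≠ 0 := by simp
  have hnt : ((n:ℝ≥0∞)+1) ≠ ⊤ := by simp
  have hdiv : (k:ℝ≥0∞) / ((n:ℝ≥0∞)+1) ≤ μ (J ⁻¹' B (Fin.last n)) :=
    (ENNReal.div_le_iff hne hnt).mpr (by rwa [mul_comm] at hfin)
  refine le_trans ?_ hdiv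
  rw [ENNReal.le_div_iff_mul_le (Or.inl hne) (Or.inl hnt)]
  have h1 : ((n:ℝ≥0∞)+1) = ENNReal.ofReal ((n:ℝ)+1) := by
    rw [ENNReal.ofReal_add (by positivity) zero_le_one]
    simp [ENNReal.ofReal_natCast]
  rw [h1, ← ENNReal.ofReal_mul (le_of_lt hα1')]
  have h2 : (1 - α) * ((n:ℝ)+1) ≤ (k:ℝ) := by
    rw [hk, mul_comm]
    exact Int.le_ceil _
  calc ENNReal.ofReal ((1-α) * ((n:ℝ)+1)) ≤ ENNReal.ofReal (k:ℝ) :=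
        ENNReal.ofReal_le_ofReal h2
    _ = (k:ℝ≥0∞) := ENNReal.ofReal_natCast k
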